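/- Let n ≥ 1, δ ∈ (0,1), and set α = (1 + δ)/2. Let (K, Enc, Dec) be a finitary messageless secret-key code over the binary alphabet {0,1} with codeword length n and soundness error ε_s. Let f be the truncated uniform resampler with budget αn (over {0,1}^n), applied to γ = Enc(sk), and suppose P[Dec(sk, f(γ)) ≠ tampered ∧ f(γ) ≠ γ] ≤ ε_t. Then ε_s + ε_t ≥ 1 − 2^{−n} − exp(−δ²n/6). -/

import Mathlib

open Finset Classical

/-- Decoding outcomes of a messageless secret-key code. -/
inductive DecOut where
  | valid
  | invalid
  | tampered
deriving DecidableEq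

/-- The truncated uniform resampler with budget `b` over `{0,1}^n`: on codeword `γ` and
uniform randomness `u`, it outputs `u` if `dist(u, γ) ≤ b` and `γ` otherwise. -/
noncomputable def resample {n : ℕ} (b : ℝ) (γ u : Fin n → Bool) : Fin n → Bool :=
  if (hammingDist u γ : ℝ) ≤ b then u else γ

/-!
Every key `k` and every resampling outcome `u` fall into one of four events: `u = Enc k`;
`u` lies outside the Hamming ball of radius `αn` around `Enc k`; the resampled word `u ≠ Enc k`
is not flagged as tampered; or `Dec k u ≠ invalid` (if `u` is inside the ball and is flagged
as tampered, it is in particular not rejected as invalid). Averaging over the key and the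
uniform `u`, the events have probabilities at most `2⁻ⁿ`, `exp (-δ²n/2)` (Hoeffding's bound
for the Hamming weight of a uniform word, and `δ²/2 ≥ δ²/6`), `εt` and `εs` (since `u` is
independent of the key).
-/

lemma sum_exp_mul_hammingDist {ι α : Type*} [Fintype ι] [DecidableEq ι] [Fintype α]
    [DecidableEq α] (γ : ι → α) (t : ℝ) :
    ∑ u : ι → α, Real.exp (t * hammingDist u γ)
      = (1 + (Fintype.card α - 1) * Real.exp t) ^ Fintype.card ι := by
  have hcoord : ∀ c : α, ∑ a : α, (if a = c then 1 else Real.exp t)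
      = 1 + (Fintype.card α - 1) * Real.exp t := by
    intro c
    have hsplit : ∀ a : α, (if a = c then 1 else Real.exp t)
        = Real.exp t + if a = c then 1 - Real.exp t else 0 := by
      intro a; split_ifs <;> ring
    simp only [hsplit, sum_add_distrib, sum_const, card_univ, nsmul_eq_mul, sum_ite_eq',
      mem_univ, if_true]
    ring
  have hprod : ∀ u : ι → α, Real.exp (t * hammingDist u γ)
      = ∏ i, if u i = γ i then 1 else Real.exp t := by
    intro u
    rw [prod_ite, prod_const_one, one_mul, prod_const, mul_comm, Real.exp_nat_mul, hammingDist]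
  simp only [hprod, ← Fintype.prod_sum (fun i a => if a = γ i then 1 else Real.exp t), hcoord,
    prod_const, card_univ]

lemma one_add_exp_le (t : ℝ) : 1 + Real.exp t ≤ 2 * Real.exp (t / 2 + t ^ 2 / 8) := by
  have hcosh : 1 + Real.exp t = 2 * Real.exp (t / 2) * Real.cosh (t / 2) := by
    rw [Real.cosh_eq, mul_assoc, ← mul_div_assoc, mul_add, ← Real.exp_add, ← Real.exp_add]
    ring_nf
    simp [add_comm]
  calc 1 + Real.exp t = 2 * Real.exp (t / 2) * Real.cosh (t / 2) := hcosh
    _ ≤ 2 * Real.exp (t / 2) * Real.exp ((t / 2) ^ 2 / 2) := by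
      gcongr; exact Real.cosh_le_exp_half_sq _
    _ = 2 * Real.exp (t / 2 + t ^ 2 / 8) := by rw [mul_assoc, ← Real.exp_add]; ring_nf

lemma card_lt_hammingDist_le {ι : Type*} [Fintype ι] [DecidableEq ι] (γ : ι → Bool) {δ : ℝ}
    (hδ : 0 ≤ δ) :
    (#{u | (1 + δ) / 2 * Fintype.card ι < hammingDist u γ} : ℝ)
      ≤ 2 ^ Fintype.card ι * Real.exp (-(δ ^ 2 * Fintype.card ι / 2)) := by
  set N := Fintype.card ι
  set r : ℝ := (1 + δ) / 2 * N
  -- Chernoff's method with the exponent `t = 2δ`, which optimizes the bound.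
  set t : ℝ := 2 * δ
  have hmarkov : ∀ u : ι → Bool, r < hammingDist u γ →
      (1 : ℝ) ≤ Real.exp (t * (hammingDist u γ - r)) := fun u hu =>
    Real.one_le_exp (mul_nonneg (by positivity) (sub_pos.2 hu).le)
  calc (#{u | r < hammingDist u γ} : ℝ)
      = ∑ u ∈ univ with r < hammingDist u γ, 1 := by rw [cast_card]
    _ ≤ ∑ u ∈ univ with r < hammingDist u γ, Real.exp (t * (hammingDist u γ - r)) :=
      sum_le_sum fun u hu => hmarkov u (mem_filter.1 hu).2
    _ ≤ ∑ u, Real.exp (t * (hammingDist u γ - r)) :=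
      sum_le_sum_of_subset_of_nonneg (filter_subset _ _) fun _ _ _ => (Real.exp_pos _).le
    _ = Real.exp (-(t * r)) * (1 + Real.exp t) ^ N := by
      have := sum_exp_mul_hammingDist γ t
      norm_num at this
      rw [← this, mul_sum]
      congr 1 with u
      rw [← Real.exp_add]; ring_nf
    _ ≤ Real.exp (-(t * r)) * (2 * Real.exp (t / 2 + t ^ 2 / 8)) ^ N := by
      gcongr; exact one_add_exp_le t
    _ = 2 ^ N * Real.exp (-(δ ^ 2 * N / 2)) := by
      rw [mul_pow, ← Real.exp_nat_mul, mul_left_comm, ← Real.exp_add]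
      congr 2
      simp only [r, t]
      ring

noncomputable def probKeyUniform {K U : Type*} [Fintype K] [Fintype U] (w : K → ℝ)
    (P : K → U → Prop) : ℝ :=
  ∑ k, ∑ u, if P k u then w k * (Fintype.card U : ℝ)⁻¹ else 0

section probKeyUniform

variable {K U : Type*} [Fintype K] [Fintype U] {w : K → ℝ}

lemma probKeyUniform_true [Nonempty U] (hw1 : ∑ k, w k = 1) :
    probKeyUniform w (fun (_ : K) (_ : U) => True) = 1 := by
  simp only [probKeyUniform, if_true, sum_const, card_univ, nsmul_eq_mul]
  field_simp
  exact hw1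

lemma probKeyUniform_mono (hw0 : ∀ k, 0 ≤ w k) {P Q : K → U → Prop}
    (h : ∀ k u, P k u → Q k u) : probKeyUniform w P ≤ probKeyUniform w Q := by
  unfold probKeyUniform
  gcongr with k _ u _
  split_ifs with hP hQ
  · exact le_rfl
  · exact absurd (h k u hP) hQ
  · exact mul_nonneg (hw0 k) (by positivity)
  · exact le_rfl

lemma probKeyUniform_or_le (hw0 : ∀ k, 0 ≤ w k) (P Q : K → U → Prop) :
    probKeyUniform w (fun k u => P k u ∨ Q k u) ≤ probKeyUniform w P + probKeyUniform w Q := by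
  unfold probKeyUniform
  rw [← sum_add_distrib]
  gcongr with k _
  rw [← sum_add_distrib]
  gcongr with u _
  have := mul_nonneg (hw0 k) (inv_nonneg.2 (Nat.cast_nonneg (Fintype.card U)))
  split_ifs <;> simp_all

lemma probKeyUniform_le_of_card_le [Nonempty U] (hw0 : ∀ k, 0 ≤ w k) (hw1 : ∑ k, w k = 1)
    {P : K → U → Prop} {ε : ℝ} (h : ∀ k, (#{u | P k u} : ℝ) ≤ ε * Fintype.card U) :
    probKeyUniform w P ≤ ε := by
  have hU : (0 : ℝ) < Fintype.card U := Nat.cast_pos.2 Fintype.card_pos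
  calc probKeyUniform w P
      = ∑ k, w k * ((Fintype.card U : ℝ)⁻¹ * #{u | P k u}) := by
        unfold probKeyUniform
        congr 1 with k
        rw [← sum_filter, sum_const, nsmul_eq_mul]; ring
    _ ≤ ∑ k, w k * ε := by
        gcongr with k _
        · exact hw0 k
        · rw [inv_mul_le_iff₀ hU, mul_comm]; exact h k
    _ = ε := by rw [← sum_mul, hw1, one_mul]

lemma probKeyUniform_le_of_forall [Nonempty U] {P : K → U → Prop} {ε : ℝ}
    (h : ∀ u, ∑ k, (if P k u then w k else 0) ≤ ε) : probKeyUniform w P ≤ ε := by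
  have hU : (Fintype.card U : ℝ) ≠ 0 := Nat.cast_ne_zero.2 Fintype.card_ne_zero
  calc probKeyUniform w P
      = ∑ u, (∑ k, if P k u then w k else 0) * (Fintype.card U : ℝ)⁻¹ := by
        unfold probKeyUniform
        rw [sum_comm]
        simp only [sum_mul, ite_mul, zero_mul]
    _ ≤ ∑ _u : U, ε * (Fintype.card U : ℝ)⁻¹ := by gcongr with u _; exact h u
    _ = ε := by rw [sum_const, card_univ, nsmul_eq_mul]; field_simp

end probKeyUniform

lemma eq_or_lt_hammingDist_or_undetected_or_ne_invalid {n : ℕ} (b : ℝ) (γ u : Fin n → Bool)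
    (D : (Fin n → Bool) → DecOut) :
    u = γ ∨ b < hammingDist u γ ∨ (D (resample b γ u) ≠ .tampered ∧ resample b γ u ≠ γ)
      ∨ D u ≠ .invalid := by
  by_cases hfar : b < hammingDist u γ
  · exact .inr (.inl hfar)
  have hres : resample b γ u = u := if_pos (not_lt.1 hfar)
  rw [hres]
  by_cases hγ : u = γ
  · exact .inl hγ
  cases hD : D u <;> simp [hγ, hfar]

theorem stmt_2_general
    {K : Type} [Fintype K]
    {n : ℕ}
    (δ : ℝ) (hδ0 : 0 < δ)
    (w : K → ℝ) (hw0 : ∀ k, 0 ≤ w k) (hw1 : ∑ k, w k = 1)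
    (Enc : K → Fin n → Bool) (Dec : K → (Fin n → Bool) → DecOut)
    (εs εt : ℝ)
    (hsound : ∀ γ : Fin n → Bool,
      (∑ k, if Dec k γ ≠ DecOut.invalid then w k else 0) ≤ εs)
    (htamper :
      (∑ k, ∑ u : Fin n → Bool,
        if Dec k (resample ((1 + δ) / 2 * n) (Enc k) u) ≠ DecOut.tampered
           ∧ resample ((1 + δ) / 2 * n) (Enc k) u ≠ Enc k
        then w k * ((2 : ℝ) ^ n)⁻¹ else 0) ≤ εt) :
    1 - ((2 : ℝ) ^ n)⁻¹ - Real.exp (-(δ ^ 2 * n / 6)) ≤ εs + εt := by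
  set b : ℝ := (1 + δ) / 2 * n
  have hcard : (Fintype.card (Fin n → Bool) : ℝ) = 2 ^ n := by simp
  have hfixed : probKeyUniform w (fun k u => u = Enc k) ≤ (2 ^ n)⁻¹ :=
    probKeyUniform_le_of_card_le hw0 hw1 fun k => by
      rw [hcard, inv_mul_cancel₀ (by positivity)]
      exact_mod_cast card_le_one.2 (by simp)
  have hfar : probKeyUniform w (fun k u => b < hammingDist u (Enc k))
      ≤ Real.exp (-(δ ^ 2 * n / 6)) := by
    refine probKeyUniform_le_of_card_le hw0 hw1 fun k => ?_
    have hhoeffding := card_lt_hammingDist_le (Enc k) hδ0.le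
    rw [Fintype.card_fin] at hhoeffding
    refine hhoeffding.trans ?_
    have hδn : 0 ≤ δ ^ 2 * n := by positivity
    rw [hcard, mul_comm]
    exact mul_le_mul_of_nonneg_right (Real.exp_le_exp.2 (by linarith)) (by positivity)
  have hundetected : probKeyUniform w (fun k u =>
      Dec k (resample b (Enc k) u) ≠ .tampered ∧ resample b (Enc k) u ≠ Enc k) ≤ εt := by
    unfold probKeyUniform
    rw [hcard]
    convert htamper
  have haccepted : probKeyUniform w (fun k u => Dec k u ≠ .invalid) ≤ εs :=
    probKeyUniform_le_of_forall fun u => by convert hsound u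
  have hcover := (probKeyUniform_true (U := Fin n → Bool) hw1).symm.le.trans <|
    probKeyUniform_mono hw0 fun k u _ =>
      eq_or_lt_hammingDist_or_undetected_or_ne_invalid b (Enc k) u (Dec k)
  have hunion := hcover.trans <| (probKeyUniform_or_le hw0 _ _).trans <| add_le_add le_rfl <|
    (probKeyUniform_or_le hw0 _ _).trans <| add_le_add le_rfl <| probKeyUniform_or_le hw0 _ _
  linarith

/-- Binary case: for `δ ∈ (0,1)` and `α = (1 + δ)/2`, any messageless
secret-key code over `{0,1}` with soundness error `εs` whose tamper-detection failure
against the truncated uniform resampler with budget `α·n` is at most `εt` satisfies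
`εs + εt ≥ 1 - 2^(-n) - exp(-δ²n/6)`. -/
theorem stmt_2
    {K : Type} [Fintype K] [Nonempty K]
    {n : ℕ} (hn : 1 ≤ n)
    (δ : ℝ) (hδ0 : 0 < δ) (hδ1 : δ < 1)
    (w : K → ℝ) (hw0 : ∀ k, 0 ≤ w k) (hw1 : ∑ k, w k = 1)
    (Enc : K → Fin n → Bool) (Dec : K → (Fin n → Bool) → DecOut)
    (εs εt : ℝ)
    (hsound : ∀ γ : Fin n → Bool,
      (∑ k, if Dec k γ ≠ DecOut.invalid then w k else 0) ≤ εs)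
    (htamper :
      (∑ k, ∑ u : Fin n → Bool,
        if Dec k (resample ((1 + δ) / 2 * n) (Enc k) u) ≠ DecOut.tampered
           ∧ resample ((1 + δ) / 2 * n) (Enc k) u ≠ Enc k
        then w k * ((2 : ℝ) ^ n)⁻¹ else 0) ≤ εt) :
    1 - ((2 : ℝ) ^ n)⁻¹ - Real.exp (-(δ ^ 2 * n / 6)) ≤ εs + εt :=
  stmt_2_general δ hδ0 w hw0 hw1 Enc Dec εs εt hsound htamper
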